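/- arXiv:1702.03738 — 6 statements merged into one kernel-verified Lean document; each statement's English description precedes it below -/
import Mathlib

section
/- A price p supporting the primal solution exists (i.e., x_i* maximizes pᵀg_i − C_i(x_i) over X_i for every i) if and only if the duality gap ν − ν^D is zero; moreover, in that case the set of supporting prices equals the set of maximizers of the dual problem. -/
/-!
For every price `p` the dual objective splits as
`pᵀd − Σ π_i(p) = Σ C_i(x*_i) − Σ (π_i(p) − (pᵀg*_i − C_i(x*_i)))`,
because `Σ g*_i = d`. Each summand of the second sum is a nonnegative gap, so the dual objective
never exceeds `ν`, and it equals `ν` exactly when every gap vanishes, i.e. when `p` supports `x*`.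
Hence a supporting price exists iff `ν` is attained by the dual, iff `ν = ν^D`, and then the
supporting prices are exactly the dual maximizers.
-/

/-- A price `p` supports the primal solution `x*` if every `x*_i` maximizes
`pᵀ g_i − C_i x_i` over `X_i`. -/
def SupportsPrice {T : ℕ} {I : Type*}
    (X : I → Set ((Fin T → ℝ) × (Fin T → ℝ)))
    (C : I → ((Fin T → ℝ) × (Fin T → ℝ)) → ℝ)
    (xstar : I → (Fin T → ℝ) × (Fin T → ℝ)) (p : Fin T → ℝ) : Prop :=
  ∀ i, ∀ x ∈ X i,
    (∑ t, p t * x.2 t) - C i x ≤ (∑ t, p t * (xstar i).2 t) - C i (xstar i)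

lemma IsGreatest.exists_eq_iff_eq {P α : Type*} [PartialOrder α] {q : P → α} {a b : α}
    (hb : IsGreatest (Set.range q) b) (ha : ∀ p, q p ≤ a) : (∃ p, q p = a) ↔ a = b := by
  rw [← Set.mem_range, eq_comm, ← hb.isGreatest_iff_eq]
  exact ⟨fun h => ⟨h, Set.forall_mem_range.2 ha⟩, And.left⟩

section SupportingPrice

variable {T : ℕ} {I : Type*} {X : I → Set ((Fin T → ℝ) × (Fin T → ℝ))}
  {C : I → ((Fin T → ℝ) × (Fin T → ℝ)) → ℝ} {π : I → (Fin T → ℝ) → ℝ}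
  {xstar : I → (Fin T → ℝ) × (Fin T → ℝ)} {d p : Fin T → ℝ}

lemma supportsPrice_iff_forall_eq
    (hπ : ∀ i, IsGreatest {v | ∃ x ∈ X i, v = (∑ t, p t * x.2 t) - C i x} (π i p))
    (hxstar : ∀ i, xstar i ∈ X i) :
    SupportsPrice X C xstar p ↔ ∀ i, π i p = (∑ t, p t * (xstar i).2 t) - C i (xstar i) := by
  refine forall_congr' fun i => ?_
  rw [← (hπ i).isGreatest_iff_eq]
  refine ⟨fun h => ⟨⟨xstar i, hxstar i, rfl⟩, ?_⟩, fun h x hx => h.2 ⟨x, hx, rfl⟩⟩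
  rintro _ ⟨x, hx, rfl⟩
  exact h x hx

lemma profit_gap_nonneg
    (hπ : ∀ i, IsGreatest {v | ∃ x ∈ X i, v = (∑ t, p t * x.2 t) - C i x} (π i p))
    (hxstar : ∀ i, xstar i ∈ X i) (i : I) :
    0 ≤ π i p - ((∑ t, p t * (xstar i).2 t) - C i (xstar i)) :=
  sub_nonneg.2 ((hπ i).2 ⟨xstar i, hxstar i, rfl⟩)

variable [Fintype I]

lemma dual_objective_eq_sub_sum_profit_gap (hbal : ∑ i, (xstar i).2 = d) :
    (∑ t, p t * d t) - ∑ i, π i p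
      = ∑ i, C i (xstar i) - ∑ i, (π i p - ((∑ t, p t * (xstar i).2 t) - C i (xstar i))) := by
  have hpd : ∑ t, p t * d t = ∑ i, ∑ t, p t * (xstar i).2 t := by
    simpa only [dotProduct] using (hbal ▸ dotProduct_sum p Finset.univ fun i => (xstar i).2)
  rw [hpd]
  simp only [Finset.sum_sub_distrib]
  ring

lemma dual_objective_le
    (hπ : ∀ i, IsGreatest {v | ∃ x ∈ X i, v = (∑ t, p t * x.2 t) - C i x} (π i p))
    (hxstar : ∀ i, xstar i ∈ X i) (hbal : ∑ i, (xstar i).2 = d) :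
    (∑ t, p t * d t) - ∑ i, π i p ≤ ∑ i, C i (xstar i) := by
  rw [dual_objective_eq_sub_sum_profit_gap hbal, sub_le_self_iff]
  exact Finset.sum_nonneg fun i _ => profit_gap_nonneg hπ hxstar i

lemma supportsPrice_iff_dual_objective_eq
    (hπ : ∀ i, IsGreatest {v | ∃ x ∈ X i, v = (∑ t, p t * x.2 t) - C i x} (π i p))
    (hxstar : ∀ i, xstar i ∈ X i) (hbal : ∑ i, (xstar i).2 = d) :
    SupportsPrice X C xstar p ↔ (∑ t, p t * d t) - ∑ i, π i p = ∑ i, C i (xstar i) := by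
  rw [supportsPrice_iff_forall_eq hπ hxstar, dual_objective_eq_sub_sum_profit_gap hbal,
    sub_eq_self, Finset.sum_eq_zero_iff_of_nonneg fun i _ => profit_gap_nonneg hπ hxstar i]
  simp only [Finset.mem_univ, forall_const, sub_eq_zero]

end SupportingPrice

theorem stmt5_general {T : ℕ} {I : Type*} [Fintype I]
    (X : I → Set ((Fin T → ℝ) × (Fin T → ℝ)))
    (C : I → ((Fin T → ℝ) × (Fin T → ℝ)) → ℝ)
    (d : Fin T → ℝ)
    (π : I → (Fin T → ℝ) → ℝ)
    (hπ : ∀ i p, IsGreatest {v | ∃ x ∈ X i, v = (∑ t, p t * x.2 t) - C i x} (π i p))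
    (xstar : I → (Fin T → ℝ) × (Fin T → ℝ))
    (hxstarX : ∀ i, xstar i ∈ X i)
    (hbal : (∑ i, (xstar i).2) = d)
    (ν νD : ℝ)
    (hνopt : ν = ∑ i, C i (xstar i))
    (hνD : IsGreatest {v | ∃ p : Fin T → ℝ,
        v = (∑ t, p t * d t) - ∑ i, π i p} νD) :
    ((∃ p, SupportsPrice X C xstar p) ↔ ν - νD = 0) ∧
    (ν - νD = 0 →
      {p | SupportsPrice X C xstar p}
        = {p | (∑ t, p t * d t) - ∑ i, π i p = νD}) := by
  subst hνopt
  have hsupport p := supportsPrice_iff_dual_objective_eq (fun i => hπ i p) hxstarX hbal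
  have hdual : IsGreatest (Set.range fun p => (∑ t, p t * d t) - ∑ i, π i p) νD := by
    simpa only [Set.range, eq_comm] using hνD
  simp only [hsupport, sub_eq_zero]
  refine ⟨hdual.exists_eq_iff_eq fun p => dual_objective_le (fun i => hπ i p) hxstarX hbal, ?_⟩
  rintro rfl
  rfl

/-- A supporting price exists iff the duality gap `ν − ν^D` is zero; moreover, in that
case the set of supporting prices equals the set of maximizers of the dual problem. -/
theorem stmt5 {T : ℕ} {I : Type*} [Fintype I]
    (X : I → Set ((Fin T → ℝ) × (Fin T → ℝ)))
    (C : I → ((Fin T → ℝ) × (Fin T → ℝ)) → ℝ)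
    (d : Fin T → ℝ)
    (π : I → (Fin T → ℝ) → ℝ)
    (hπ : ∀ i p, IsGreatest {v | ∃ x ∈ X i, v = (∑ t, p t * x.2 t) - C i x} (π i p))
    (xstar : I → (Fin T → ℝ) × (Fin T → ℝ))
    (hxstarX : ∀ i, xstar i ∈ X i)
    (hbal : (∑ i, (xstar i).2) = d)
    (ν νD : ℝ)
    (hν : IsLeast {v | ∃ x : I → (Fin T → ℝ) × (Fin T → ℝ),
        (∀ i, x i ∈ X i) ∧ (∑ i, (x i).2) = d ∧ v = ∑ i, C i (x i)} ν)
    (hνopt : ν = ∑ i, C i (xstar i))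
    (hνD : IsGreatest {v | ∃ p : Fin T → ℝ,
        v = (∑ t, p t * d t) - ∑ i, π i p} νD) :
    ((∃ p, SupportsPrice X C xstar p) ↔ ν - νD = 0) ∧
    (ν - νD = 0 →
      {p | SupportsPrice X C xstar p}
        = {p | (∑ t, p t * d t) - ∑ i, π i p = νD}) :=
  stmt5_general X C d π hπ xstar hxstarX hbal ν νD hνopt hνD
end

section
/- Suppose that after minimizing over the binary commitment variables the cost function c_i(g) = min{C_i(u,g) : (u,g) ∈ X_i} is convex with convex domain. Then a price p supports x_i* in the decentralized dispatch over X_i if and only if p supports x_i* in the modified decentralized dispatch over cl(X̃_i(ε_i)), for all ε_i with strictly positive components. -/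
/-!
A pair `x*` maximizes profit over `{y ∈ X | y.2 ∈ N}` exactly when `x*` is a cheapest commitment
for its output `g*` and the reduced profit `g ↦ p ⬝ g - c g` is maximal at `g*` on `D ∩ N`.
Since `X̃(ε)` contains every point of `X` whose output lies in the `ε`-box around `g*`, support
over `cl X̃(ε)` makes `g*` a local maximum of the concave reduced profit on its convex domain,
hence a global one.
-/

open Set Filter Topology

theorem setOf_forall_abs_sub_le_mem_nhds {ι : Type*} [Finite ι] {ε : ι → ℝ}
    (hε : ∀ i, 0 < ε i) (a : ι → ℝ) : {g : ι → ℝ | ∀ i, |g i - a i| ≤ ε i} ∈ 𝓝 a :=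
  eventually_all.2 fun i =>
    ((continuous_apply i).tendsto a).eventually (Metric.closedBall_mem_nhds (a i) (hε i))

section FiberMinimum

variable {α β : Type*} {X : Set (α × β)} {C : α × β → ℝ} {c : β → ℝ}

theorem supports_iff_of_isLeast_fiber
    (hc : ∀ g ∈ {g | ∃ u, (u, g) ∈ X}, IsLeast {v | ∃ u, (u, g) ∈ X ∧ v = C (u, g)} (c g))
    (f : β → ℝ) {x : α × β} (hx : x ∈ X) {N : Set β} (hxN : x.2 ∈ N) :
    (∀ y ∈ X, y.2 ∈ N → f y.2 - C y ≤ f x.2 - C x) ↔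
      C x = c x.2 ∧ IsMaxOn (fun g => f g - c g) ({g | ∃ u, (u, g) ∈ X} ∩ N) x.2 := by
  have hcle : ∀ y ∈ X, c y.2 ≤ C y := fun y hy => (hc y.2 ⟨y.1, hy⟩).2 ⟨y.1, hy, rfl⟩
  constructor
  · intro h
    have hCx : C x = c x.2 := by
      obtain ⟨u, hu, hCu⟩ := (hc x.2 ⟨x.1, hx⟩).1
      have := h (u, x.2) hu hxN
      linarith [hcle x hx]
    refine ⟨hCx, fun g ⟨hg, hgN⟩ => ?_⟩
    obtain ⟨u, hu, hCu⟩ := (hc g hg).1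
    have := h (u, g) hu hgN
    show f g - c g ≤ f x.2 - c x.2
    linarith
  · rintro ⟨hCx, hmax⟩ y hy hyN
    have : f y.2 - c y.2 ≤ f x.2 - c x.2 := hmax ⟨⟨y.1, hy⟩, hyN⟩
    linarith [hcle y hy]

end FiberMinimum

theorem stmt7_general {T : ℕ}
    (X : Set ((Fin T → ℝ) × (Fin T → ℝ)))
    (hXc : IsCompact X)
    (C : ((Fin T → ℝ) × (Fin T → ℝ)) → ℝ)
    (c : (Fin T → ℝ) → ℝ)
    (D : Set (Fin T → ℝ)) (hDdef : D = {g | ∃ u, (u, g) ∈ X})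
    (hcdef : ∀ g ∈ D, IsLeast {v | ∃ u, (u, g) ∈ X ∧ v = C (u, g)} (c g))
    (hDconv : Convex ℝ D) (hcconv : ConvexOn ℝ D c)
    (xstar : (Fin T → ℝ) × (Fin T → ℝ))
    (Ωbar Ψ : Set ((Fin T → ℝ) × (Fin T → ℝ)))
    (hΩbar : Ωbar ⊆ X)
    (hΨdef : Ψ = {x | x ∈ X ∧ ∀ y ∈ X, C x ≤ C y})
    (hxstar : xstar ∈ Ωbar)
    (Xt : (Fin T → ℝ) → Set ((Fin T → ℝ) × (Fin T → ℝ)))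
    (hXt : ∀ ε, Xt ε = Ψ ∪ ⋃ xb ∈ Ωbar, {x | x ∈ X ∧ ∀ t, |x.2 t - xb.2 t| ≤ ε t})
    (p : Fin T → ℝ) (ε : Fin T → ℝ) (hε : ∀ t, 0 < ε t) :
    (∀ x ∈ X,
        (∑ t, p t * x.2 t) - C x ≤ (∑ t, p t * xstar.2 t) - C xstar) ↔
    (∀ x ∈ closure (Xt ε),
        (∑ t, p t * x.2 t) - C x ≤ (∑ t, p t * xstar.2 t) - C xstar) := by
  subst hDdef hΨdef
  have hXt_sub : Xt ε ⊆ X := by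
    rw [hXt]
    exact union_subset (fun _ hx => hx.1) (iUnion₂_subset fun _ _ _ hx => hx.1)
  refine ⟨fun h x hx => h x (hXc.isClosed.closure_subset_iff.2 hXt_sub hx), fun h => ?_⟩
  have hxstarX : xstar ∈ X := hΩbar hxstar
  set N := {g : Fin T → ℝ | ∀ t, |g t - xstar.2 t| ≤ ε t}
  have hlocal : ∀ y ∈ X, y.2 ∈ N →
      (∑ t, p t * y.2 t) - C y ≤ (∑ t, p t * xstar.2 t) - C xstar := fun y hy hyN =>
    h y (subset_closure (by rw [hXt]; exact Or.inr (mem_biUnion hxstar ⟨hy, hyN⟩)))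
  obtain ⟨hCx, hmax⟩ := (supports_iff_of_isLeast_fiber hcdef (fun g => ∑ t, p t * g t) hxstarX
    (N := N) fun t => by simpa using (hε t).le).1 hlocal
  have hxstarD : xstar.2 ∈ {g | ∃ u, (u, g) ∈ X} := ⟨xstar.1, hxstarX⟩
  have hglobal := IsMaxOn.of_isLocalMaxOn_of_concaveOn hxstarD
    (mem_of_superset (inter_mem_nhdsWithin _ (setOf_forall_abs_sub_le_mem_nhds hε _)) hmax)
    (((dotProductBilin ℝ ℝ p).concaveOn hDconv).sub hcconv)
  exact fun x hx => (supports_iff_of_isLeast_fiber hcdef (fun g => ∑ t, p t * g t) hxstarX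
    (mem_univ _)).2 ⟨hCx, hglobal.on_subset inter_subset_left⟩ x hx trivial

/-- Proposition 1: if after minimizing over the binary commitment variables the cost
`c g = min{C (u,g) : (u,g) ∈ X}` is a convex function with convex domain, then a price
`p` supports `x*` in the decentralized dispatch over `X` iff it supports `x*` in the
modified decentralized dispatch over `cl(X̃(ε))`, for all `ε` with positive components. -/
theorem stmt7 {T : ℕ}
    (X : Set ((Fin T → ℝ) × (Fin T → ℝ)))
    (hXc : IsCompact X) (hXne : X.Nonempty)
    (hbin : ∀ x ∈ X, ∀ t, x.1 t = 0 ∨ x.1 t = 1)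
    (hpos : ∀ x ∈ X, ∀ t, 0 ≤ x.2 t)
    (C : ((Fin T → ℝ) × (Fin T → ℝ)) → ℝ)
    (hC : ContinuousOn C X)
    (c : (Fin T → ℝ) → ℝ)
    (D : Set (Fin T → ℝ)) (hDdef : D = {g | ∃ u, (u, g) ∈ X})
    (hcdef : ∀ g ∈ D, IsLeast {v | ∃ u, (u, g) ∈ X ∧ v = C (u, g)} (c g))
    (hDconv : Convex ℝ D) (hcconv : ConvexOn ℝ D c)
    (xstar : (Fin T → ℝ) × (Fin T → ℝ))
    (Ωbar Ψ : Set ((Fin T → ℝ) × (Fin T → ℝ)))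
    (hΩbar : Ωbar ⊆ X)
    (hΨdef : Ψ = {x | x ∈ X ∧ ∀ y ∈ X, C x ≤ C y})
    (hxstar : xstar ∈ Ωbar)
    (Xt : (Fin T → ℝ) → Set ((Fin T → ℝ) × (Fin T → ℝ)))
    (hXt : ∀ ε, Xt ε = Ψ ∪ ⋃ xb ∈ Ωbar, {x | x ∈ X ∧ ∀ t, |x.2 t - xb.2 t| ≤ ε t})
    (p : Fin T → ℝ) (ε : Fin T → ℝ) (hε : ∀ t, 0 < ε t) :
    (∀ x ∈ X,
        (∑ t, p t * x.2 t) - C x ≤ (∑ t, p t * xstar.2 t) - C xstar) ↔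
    (∀ x ∈ closure (Xt ε),
        (∑ t, p t * x.2 t) - C x ≤ (∑ t, p t * xstar.2 t) - C xstar) :=
  stmt7_general X hXc C c D hDdef hcdef hDconv hcconv xstar Ωbar Ψ hΩbar hΨdef hxstar Xt hXt p ε hε
end

section
/- In Example 1 (single consumer with benefit B(d) = b·d on [0, d_max]; single producer with cost C(u,g) = a·g + w·u on {(u,g) : u ∈ {0,1}, 0 ≤ g ≤ u·g_max}; parameters a ≥ 0, w > 0, a + w/g_max < b, b·d_max < a·d_max + w), the unique primal optimum is u* = g* = d* = 0, and the convex hull price is p⁺ = a + w/g_max with total uplift (b − p⁺)·d_max > 0 paid to the consumer. -/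
/-!
Committing the unit forces a generation cost `w` that the consumer's benefit on `[0, d_max]` can
never recover, since `(b - a)·d_max < w`; so the only optimum is to do nothing. Dually, the
consumer's surplus `max 0 ((b - p)·d_max)` decreases with slope `d_max` and the producer's profit
`max 0 ((p - a)·g_max - w)` starts rising with slope `g_max > d_max` exactly at `p⁺ = a + w/g_max`,
which is therefore the strict minimizer of their sum.
-/

open Set

lemma isGreatest_linear_surplus {b p D : ℝ} (hD : 0 ≤ D) :
    IsGreatest {v | ∃ d ∈ Icc (0:ℝ) D, v = b * d - p * d} (max 0 ((b - p) * D)) := by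
  refine ⟨?_, ?_⟩
  · rcases le_total (b - p) 0 with h | h
    · exact ⟨0, ⟨le_rfl, hD⟩, by rw [max_eq_left (mul_nonpos_of_nonpos_of_nonneg h hD)]; ring⟩
    · exact ⟨D, ⟨hD, le_rfl⟩, by rw [max_eq_right (mul_nonneg h hD)]; ring⟩
  · rintro v ⟨d, ⟨hd0, hdD⟩, rfl⟩
    rcases le_total (b - p) 0 with h | h
    · exact le_max_of_le_left (by nlinarith)
    · exact le_max_of_le_right (by nlinarith)

lemma isGreatest_unit_commitment_profit {a w p G : ℝ} (hw : 0 ≤ w) (hG : 0 ≤ G) :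
    IsGreatest {v | ∃ x : ℝ × ℝ, ((x.1 = 0 ∨ x.1 = 1) ∧ 0 ≤ x.2 ∧ x.2 ≤ x.1 * G) ∧
        v = p * x.2 - a * x.2 - w * x.1} (max 0 ((p - a) * G - w)) := by
  refine ⟨?_, ?_⟩
  · rcases le_total ((p - a) * G - w) 0 with h | h
    · exact ⟨(0, 0), ⟨Or.inl rfl, le_rfl, by simp⟩, by rw [max_eq_left h]; ring⟩
    · exact ⟨(1, G), ⟨Or.inr rfl, hG, by simp⟩, by rw [max_eq_right h]; ring⟩
  · rintro v ⟨⟨u, g⟩, ⟨hu | hu, hg0, hgG⟩, rfl⟩ <;> dsimp only at * <;> subst hu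
    · obtain rfl : g = 0 := le_antisymm (by simpa using hgG) hg0
      simp
    · rcases le_total (p - a) 0 with h | h
      · exact le_max_of_le_left (by nlinarith)
      · exact le_max_of_le_right (by nlinarith)

lemma commitment_unprofitable {a w b D g : ℝ} (hw : 0 < w) (hloss : b * D < a * D + w)
    (hg0 : 0 ≤ g) (hgD : g ≤ D) : b * g - a * g - w * 1 < 0 := by
  rcases le_total b a with h | h <;> nlinarith

lemma eq_zero_or_objective_neg {a w b G D : ℝ} (hw : 0 < w) (hloss : b * D < a * D + w)
    {x : ℝ × ℝ × ℝ} (hx : x ∈ {x : ℝ × ℝ × ℝ | (x.1 = 0 ∨ x.1 = 1) ∧ 0 ≤ x.2.1 ∧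
        x.2.1 ≤ x.1 * G ∧ 0 ≤ x.2.2 ∧ x.2.2 ≤ D ∧ x.2.1 = x.2.2}) :
    x = (0, 0, 0) ∨ b * x.2.2 - a * x.2.1 - w * x.1 < 0 := by
  obtain ⟨u, g, d⟩ := x
  obtain ⟨hu | rfl, hg0, hgG, -, hdD, rfl : g = d⟩ := hx
  · subst hu
    obtain rfl : g = 0 := le_antisymm (by simpa using hgG) hg0
    exact Or.inl rfl
  · exact Or.inr (commitment_unprofitable hw hloss hg0 hdD)

lemma dual_lt_of_ne_convexHullPrice {a w b G D p₀ p : ℝ} (hp₀ : (p₀ - a) * G = w)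
    (hb : p₀ ≤ b) (hD : 0 < D) (hDG : D < G) (hp : p ≠ p₀) :
    max 0 ((b - p₀) * D) + max 0 ((p₀ - a) * G - w) <
      max 0 ((b - p) * D) + max 0 ((p - a) * G - w) := by
  rw [hp₀, sub_self, max_self, add_zero, max_eq_right (mul_nonneg (sub_nonneg.2 hb) hD.le)]
  rcases hp.lt_or_gt with h | h
  · have : (b - p₀) * D < (b - p) * D := by gcongr
    linarith [le_max_right 0 ((b - p) * D), le_max_left 0 ((p - a) * G - w)]
  · have hG : (p - p₀) * D < (p - a) * G - w := by
      rw [← hp₀]; nlinarith [mul_lt_mul_of_pos_left hDG (sub_pos.2 h)]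
    linarith [le_max_right 0 ((b - p) * D), le_max_right 0 ((p - a) * G - w)]

theorem stmt10_general (a w b gmax dmax : ℝ)
    (hw : 0 < w) (hgmax : 0 < gmax) (hdmax : 0 < dmax)
    (h1 : a + w / gmax < b) (h2 : b * dmax < a * dmax + w)
    (F : Set (ℝ × ℝ × ℝ))
    (hF : F = {x | (x.1 = 0 ∨ x.1 = 1) ∧ 0 ≤ x.2.1 ∧ x.2.1 ≤ x.1 * gmax ∧
        0 ≤ x.2.2 ∧ x.2.2 ≤ dmax ∧ x.2.1 = x.2.2})
    (obj : ℝ × ℝ × ℝ → ℝ) (hobj : obj = fun x => b * x.2.2 - a * x.2.1 - w * x.1)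
    (cons prod : ℝ → ℝ)
    (hcons : ∀ p, IsGreatest {v | ∃ d ∈ Set.Icc (0:ℝ) dmax, v = b * d - p * d} (cons p))
    (hprod : ∀ p, IsGreatest {v | ∃ x : ℝ × ℝ,
        ((x.1 = 0 ∨ x.1 = 1) ∧ 0 ≤ x.2 ∧ x.2 ≤ x.1 * gmax) ∧
        v = p * x.2 - a * x.2 - w * x.1} (prod p)) :
    ((0, 0, 0) ∈ F ∧ (∀ x ∈ F, obj x ≤ obj (0, 0, 0)) ∧
      (∀ x ∈ F, obj x = obj (0, 0, 0) → x = (0, 0, 0))) ∧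
    (∀ p, cons (a + w / gmax) + prod (a + w / gmax) ≤ cons p + prod p) ∧
    (∀ p, cons p + prod p = cons (a + w / gmax) + prod (a + w / gmax) →
      p = a + w / gmax) ∧
    cons (a + w / gmax) = (b - (a + w / gmax)) * dmax ∧
    prod (a + w / gmax) = 0 ∧
    0 < (b - (a + w / gmax)) * dmax := by
  subst hF hobj
  have hcons_eq p := (hcons p).unique (isGreatest_linear_surplus hdmax.le)
  have hprod_eq p := (hprod p).unique (isGreatest_unit_commitment_profit hw.le hgmax.le)
  set p₀ := a + w / gmax
  have hp₀ : (p₀ - a) * gmax = w := by simp only [p₀]; field_simp; ring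
  have hdg : dmax < gmax := by
    have : w / gmax * dmax < w := by nlinarith
    rwa [div_mul_eq_mul_div, div_lt_iff₀ hgmax, mul_lt_mul_iff_right₀ hw] at this
  have hdual p (hp : p ≠ p₀) : cons p₀ + prod p₀ < cons p + prod p := by
    simpa only [hcons_eq, hprod_eq] using dual_lt_of_ne_convexHullPrice hp₀ h1.le hdmax hdg hp
  have hcons₀ : cons p₀ = (b - p₀) * dmax :=
    (hcons_eq p₀).trans (max_eq_right (mul_nonneg (sub_nonneg.2 h1.le) hdmax.le))
  have hprod₀ : prod p₀ = 0 := by rw [hprod_eq, hp₀, sub_self, max_self]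
  have hobj₀ : b * (0 : ℝ) - a * 0 - w * 0 = 0 := by ring
  refine ⟨⟨⟨Or.inl rfl, le_rfl, by simp, le_rfl, hdmax.le, rfl⟩, fun x hx => ?_, fun x hx hx₀ => ?_⟩,
    fun p => ?_, fun p hp => ?_, hcons₀, hprod₀, mul_pos (sub_pos.2 h1) hdmax⟩
  · rcases eq_zero_or_objective_neg hw h2 hx with rfl | h
    · exact le_rfl
    · simp only [hobj₀]; exact h.le
  · refine (eq_zero_or_objective_neg hw h2 hx).resolve_right ?_
    simp only [hobj₀] at hx₀; exact hx₀.not_lt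
  · by_cases hp : p = p₀
    · rw [hp]
    · exact (hdual p hp).le
  · by_contra hne
    exact (hdual p hne).ne' hp

/-- Example 1: with benefit `B d = b·d` on `[0, d_max]`, cost `C(u,g) = a·g + w·u`,
and parameters `a ≥ 0`, `w > 0`, `a + w/g_max < b`, `b·d_max < a·d_max + w`, the
unique primal optimum is `u* = g* = d* = 0`, the convex hull price is the unique dual
minimizer `p⁺ = a + w/g_max`, the producer uplift is zero, and the consumer uplift
(the total uplift) is `(b − p⁺)·d_max > 0`. -/
theorem stmt10 (a w b gmax dmax : ℝ)
    (ha : 0 ≤ a) (hw : 0 < w) (hgmax : 0 < gmax) (hdmax : 0 < dmax)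
    (h1 : a + w / gmax < b) (h2 : b * dmax < a * dmax + w)
    (F : Set (ℝ × ℝ × ℝ))
    (hF : F = {x | (x.1 = 0 ∨ x.1 = 1) ∧ 0 ≤ x.2.1 ∧ x.2.1 ≤ x.1 * gmax ∧
        0 ≤ x.2.2 ∧ x.2.2 ≤ dmax ∧ x.2.1 = x.2.2})
    (obj : ℝ × ℝ × ℝ → ℝ) (hobj : obj = fun x => b * x.2.2 - a * x.2.1 - w * x.1)
    (cons prod : ℝ → ℝ)
    (hcons : ∀ p, IsGreatest {v | ∃ d ∈ Set.Icc (0:ℝ) dmax, v = b * d - p * d} (cons p))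
    (hprod : ∀ p, IsGreatest {v | ∃ x : ℝ × ℝ,
        ((x.1 = 0 ∨ x.1 = 1) ∧ 0 ≤ x.2 ∧ x.2 ≤ x.1 * gmax) ∧
        v = p * x.2 - a * x.2 - w * x.1} (prod p)) :
    ((0, 0, 0) ∈ F ∧ (∀ x ∈ F, obj x ≤ obj (0, 0, 0)) ∧
      (∀ x ∈ F, obj x = obj (0, 0, 0) → x = (0, 0, 0))) ∧
    (∀ p, cons (a + w / gmax) + prod (a + w / gmax) ≤ cons p + prod p) ∧
    (∀ p, cons p + prod p = cons (a + w / gmax) + prod (a + w / gmax) →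
      p = a + w / gmax) ∧
    cons (a + w / gmax) = (b - (a + w / gmax)) * dmax ∧
    prod (a + w / gmax) = 0 ∧
    0 < (b - (a + w / gmax)) * dmax :=
  stmt10_general a w b gmax dmax hw hgmax hdmax h1 h2 F hF obj hobj cons prod hcons hprod
end

section
/- In Example 2 (single producer with cost a·g + w·u, 0 ≤ g ≤ u·g_max; inverse demand p(d) = 2a(1 − d/d_max), i.e., benefit B(d) = 2a·d − a·d²/d_max on [0, d_max]; assume 6w/a ≤ d_max < g_max), the unique primal solution is u* = 1, g* = d* = d_max/2 with optimal welfare U = a·d_max/4 − w, and the unique convex hull price is p⁺ = a + w/g_max, with duality gap U^D − U = w·(1 − d_max/(2g_max) + w·d_max/(4a·g_max²)). -/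
/-!
On the primal side only the committed unit `u = 1` can be optimal, since shutting down forces
`g = d = 0` and welfare `0 < a·d_max/4 − w`; with `u = 1` the welfare is a concave quadratic in
`d` with vertex `d_max/2`. On the dual side the consumer's best response to a price `p ∈ [0, 2a]`
is the interior point `(2a − p)·d_max/(2a)`, and at `p⁺ = a + w/g_max` the producer earns `0`
both by staying off and by producing `g_max`. These two producer responses give the dual function
the slopes `−d⁺ < 0` and `g_max − d⁺ > 0` at `p⁺`, so `p⁺` is its unique minimiser.
-/

open Set

noncomputable section

def benefit (a dmax d : ℝ) : ℝ := 2 * a * d - a * d ^ 2 / dmax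

def demandAt (a dmax p : ℝ) : ℝ := (2 * a - p) * dmax / (2 * a)

def feasibleSet (gmax dmax : ℝ) : Set (ℝ × ℝ × ℝ) :=
  {x | (x.1 = 0 ∨ x.1 = 1) ∧ 0 ≤ x.2.1 ∧ x.2.1 ≤ x.1 * gmax ∧
    0 ≤ x.2.2 ∧ x.2.2 ≤ dmax ∧ x.2.1 = x.2.2}

def welfare (a w dmax : ℝ) (x : ℝ × ℝ × ℝ) : ℝ := benefit a dmax x.2.2 - a * x.2.1 - w * x.1

def surplusSet (a dmax p : ℝ) : Set ℝ :=
  {v | ∃ d ∈ Icc (0 : ℝ) dmax, v = benefit a dmax d - p * d}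

def profitSet (a w gmax p : ℝ) : Set ℝ :=
  {v | ∃ x : ℝ × ℝ, ((x.1 = 0 ∨ x.1 = 1) ∧ 0 ≤ x.2 ∧ x.2 ≤ x.1 * gmax) ∧
    v = p * x.2 - a * x.2 - w * x.1}

end

section Consumer

variable {a dmax : ℝ}

theorem benefit_sub_mul_eq (ha : a ≠ 0) (hd : dmax ≠ 0) (p d : ℝ) :
    benefit a dmax d - p * d = benefit a dmax (demandAt a dmax p) - p * demandAt a dmax p
      - a / dmax * (d - demandAt a dmax p) ^ 2 := by
  unfold benefit demandAt
  field_simp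
  ring

theorem demandAt_self (ha : a ≠ 0) : demandAt a dmax a = dmax / 2 := by
  unfold demandAt
  field_simp
  ring

theorem demandAt_mem_Icc (ha : 0 < a) (hd : 0 < dmax) {p : ℝ} (hp₀ : 0 ≤ p) (hp : p ≤ 2 * a) :
    demandAt a dmax p ∈ Icc 0 dmax := by
  unfold demandAt
  constructor
  · have : 0 ≤ 2 * a - p := by linarith
    positivity
  · rw [div_le_iff₀ (by positivity)]
    nlinarith

theorem isGreatest_surplusSet (ha : 0 < a) (hd : 0 < dmax) {p : ℝ} (hp₀ : 0 ≤ p)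
    (hp : p ≤ 2 * a) :
    IsGreatest (surplusSet a dmax p)
      (benefit a dmax (demandAt a dmax p) - p * demandAt a dmax p) := by
  refine ⟨⟨_, demandAt_mem_Icc ha hd hp₀ hp, rfl⟩, ?_⟩
  rintro v ⟨d, -, rfl⟩
  rw [benefit_sub_mul_eq ha.ne' hd.ne' p d]
  have : 0 ≤ a / dmax * (d - demandAt a dmax p) ^ 2 := by positivity
  linarith

end Consumer

section Producer

variable {a w gmax p : ℝ}

theorem zero_mem_profitSet : 0 ∈ profitSet a w gmax p :=
  ⟨(0, 0), ⟨Or.inl rfl, le_rfl, by simp⟩, by ring⟩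

theorem full_output_mem_profitSet (hg : 0 ≤ gmax) :
    (p - a) * gmax - w ∈ profitSet a w gmax p :=
  ⟨(1, gmax), ⟨Or.inr rfl, hg, by simp⟩, by ring⟩

theorem isGreatest_profitSet_zero (hw : 0 ≤ w) (hp : (p - a) * gmax ≤ w) :
    IsGreatest (profitSet a w gmax p) 0 := by
  refine ⟨zero_mem_profitSet, ?_⟩
  rintro v ⟨⟨u, g⟩, ⟨hu | hu, hg, hgu⟩, rfl⟩ <;> subst hu <;> dsimp only at hg hgu ⊢
  · have : g = 0 := by linarith
    simp [this]
  · rcases le_total a p with hap | hpa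
    · nlinarith [mul_le_mul_of_nonneg_left hgu (sub_nonneg.mpr hap)]
    · nlinarith [mul_nonpos_of_nonpos_of_nonneg (sub_nonpos.mpr hpa) hg]

end Producer

theorem welfare_committed_half (a w dmax : ℝ) :
    welfare a w dmax (1, dmax / 2, dmax / 2) = a * dmax / 4 - w := by
  unfold welfare benefit
  field_simp
  ring

theorem welfare_lt_of_ne {a w gmax dmax : ℝ} (ha : 0 < a) (hd : 0 < dmax)
    (hcommit : 4 * w < a * dmax) {x : ℝ × ℝ × ℝ} (hx : x ∈ feasibleSet gmax dmax)
    (hne : x ≠ (1, dmax / 2, dmax / 2)) :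
    welfare a w dmax x < welfare a w dmax (1, dmax / 2, dmax / 2) := by
  obtain ⟨u, g, d⟩ := x
  obtain ⟨hu | hu, hg, hgu, -, -, hgd⟩ := hx <;> dsimp only at hu hg hgu hgd <;> subst hu hgd
  · have hg0 : g = 0 := by linarith
    subst hg0
    rw [welfare_committed_half a w dmax]
    norm_num [welfare, benefit]
    linarith
  · have hg_ne : g ≠ dmax / 2 := fun h => hne (by rw [h])
    have key := benefit_sub_mul_eq ha.ne' hd.ne' a g
    rw [demandAt_self ha.ne'] at key
    have : 0 < a / dmax * (g - dmax / 2) ^ 2 := by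
      have : g - dmax / 2 ≠ 0 := sub_ne_zero.mpr hg_ne
      positivity
    unfold welfare
    dsimp only
    linarith

theorem lt_of_forall_le_add_mul {L : ℝ → ℝ} {P s t : ℝ} (hs : s < 0) (ht : 0 < t)
    (hLs : ∀ p, L P + s * (p - P) ≤ L p) (hLt : ∀ p, L P + t * (p - P) ≤ L p) {p : ℝ}
    (hp : p ≠ P) : L P < L p := by
  rcases hp.lt_or_gt with hlt | hgt
  · have := mul_pos_of_neg_of_neg hs (sub_neg.mpr hlt)
    linarith [hLs p]
  · have := mul_pos ht (sub_pos.mpr hgt)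
    linarith [hLt p]

section Dual

variable {a w gmax dmax : ℝ} {cons prod : ℝ → ℝ}

theorem hull_mem_Ico (hw : 0 ≤ w) (hg : 0 < gmax) (hwg : w < a * gmax) :
    a + w / gmax ∈ Ico 0 (2 * a) := by
  have : w / gmax < a := by rw [div_lt_iff₀ hg]; linarith
  have : 0 ≤ w / gmax := by positivity
  constructor <;> linarith

theorem demandAt_hull_mem_Ioo (ha : 0 < a) (hw : 0 ≤ w) (hd : 0 < dmax) (h2 : dmax < gmax)
    (hwg : w < a * gmax) : demandAt a dmax (a + w / gmax) ∈ Ioo 0 gmax := by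
  obtain ⟨hP₀, hP2a⟩ := hull_mem_Ico hw (hd.trans h2) hwg
  constructor
  · have : 0 < 2 * a - (a + w / gmax) := by linarith
    unfold demandAt
    positivity
  · exact (demandAt_mem_Icc ha hd hP₀ hP2a.le).2.trans_lt h2

variable (hcons : ∀ p, IsGreatest (surplusSet a dmax p) (cons p))
  (hprod : ∀ p, IsGreatest (profitSet a w gmax p) (prod p))
include hcons hprod

theorem dual_hull_eq (ha : 0 < a) (hw : 0 ≤ w) (hd : 0 < dmax) (h2 : dmax < gmax)
    (hwg : w < a * gmax) :
    cons (a + w / gmax) + prod (a + w / gmax)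
      = benefit a dmax (demandAt a dmax (a + w / gmax))
        - (a + w / gmax) * demandAt a dmax (a + w / gmax) := by
  obtain ⟨hP₀, hP2a⟩ := hull_mem_Ico hw (hd.trans h2) hwg
  have hPa : (a + w / gmax - a) * gmax = w := by
    field_simp [(hd.trans h2).ne']
    ring
  rw [(hcons _).unique (isGreatest_surplusSet ha hd hP₀ hP2a.le),
    (hprod _).unique (isGreatest_profitSet_zero hw hPa.le), add_zero]

theorem dual_hull_lt_of_ne (ha : 0 < a) (hw : 0 ≤ w) (hd : 0 < dmax) (h2 : dmax < gmax)
    (hwg : w < a * gmax) {p : ℝ} (hp : p ≠ a + w / gmax) :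
    cons (a + w / gmax) + prod (a + w / gmax) < cons p + prod p := by
  obtain ⟨hP₀, hP2a⟩ := hull_mem_Ico hw (hd.trans h2) hwg
  obtain ⟨hD₀, hDg⟩ := demandAt_hull_mem_Ioo ha hw hd h2 hwg
  have hval := dual_hull_eq hcons hprod ha hw hd h2 hwg
  set P := a + w / gmax with hP
  set D := demandAt a dmax P
  have hPg : P * gmax = a * gmax + w := by
    rw [hP]
    field_simp [(hd.trans h2).ne']
  have hc : ∀ p, benefit a dmax D - p * D ≤ cons p := fun p =>
    (hcons p).2 ⟨D, demandAt_mem_Icc ha hd hP₀ hP2a.le, rfl⟩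
  refine lt_of_forall_le_add_mul (L := fun p => cons p + prod p) (s := -D) (t := gmax - D)
    (by linarith) (by linarith) (fun p => ?_) (fun p => ?_) hp
  · linarith [hc p, (hprod p).2 zero_mem_profitSet]
  · linarith [hc p, (hprod p).2 (full_output_mem_profitSet (hd.trans h2).le)]

end Dual

/-- Example 2: producer cost `a·g + w·u` with `0 ≤ g ≤ u·g_max`, benefit
`B d = 2a·d − a·d²/d_max` on `[0, d_max]`, with `6w/a ≤ d_max < g_max`. The unique
primal solution is `u* = 1`, `g* = d* = d_max/2` with welfare `U = a·d_max/4 − w`; the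
unique convex hull price is `p⁺ = a + w/g_max`; and the duality gap is
`U^D − U = w(1 − d_max/(2g_max) + w·d_max/(4a·g_max²))`. -/
theorem stmt12 (a w gmax dmax : ℝ)
    (ha : 0 < a) (hw : 0 < w) (h1 : 6 * w / a ≤ dmax) (h2 : dmax < gmax)
    (B : ℝ → ℝ) (hB : B = fun d => 2 * a * d - a * d ^ 2 / dmax)
    (F : Set (ℝ × ℝ × ℝ))
    (hF : F = {x | (x.1 = 0 ∨ x.1 = 1) ∧ 0 ≤ x.2.1 ∧ x.2.1 ≤ x.1 * gmax ∧
        0 ≤ x.2.2 ∧ x.2.2 ≤ dmax ∧ x.2.1 = x.2.2})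
    (obj : ℝ × ℝ × ℝ → ℝ) (hobj : obj = fun x => B x.2.2 - a * x.2.1 - w * x.1)
    (cons prod : ℝ → ℝ)
    (hcons : ∀ p, IsGreatest {v | ∃ d ∈ Set.Icc (0:ℝ) dmax, v = B d - p * d} (cons p))
    (hprod : ∀ p, IsGreatest {v | ∃ x : ℝ × ℝ,
        ((x.1 = 0 ∨ x.1 = 1) ∧ 0 ≤ x.2 ∧ x.2 ≤ x.1 * gmax) ∧
        v = p * x.2 - a * x.2 - w * x.1} (prod p)) :
    ((1, dmax / 2, dmax / 2) ∈ F ∧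
     (∀ x ∈ F, obj x ≤ obj (1, dmax / 2, dmax / 2)) ∧
     (∀ x ∈ F, obj x = obj (1, dmax / 2, dmax / 2) → x = (1, dmax / 2, dmax / 2)) ∧
     obj (1, dmax / 2, dmax / 2) = a * dmax / 4 - w) ∧
    (∀ p, cons (a + w / gmax) + prod (a + w / gmax) ≤ cons p + prod p) ∧
    (∀ p, cons p + prod p = cons (a + w / gmax) + prod (a + w / gmax) →
      p = a + w / gmax) ∧
    cons (a + w / gmax) + prod (a + w / gmax) - (a * dmax / 4 - w)
      = w * (1 - dmax / (2 * gmax) + w * dmax / (4 * a * gmax ^ 2)) := by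
  obtain rfl : B = benefit a dmax := hB
  obtain rfl : F = feasibleSet gmax dmax := hF
  obtain rfl : obj = welfare a w dmax := hobj
  have hcommit : 4 * w < a * dmax := by
    rw [div_le_iff₀ ha] at h1
    linarith
  have hd : 0 < dmax := by nlinarith
  have hwg : w < a * gmax := by nlinarith
  have hprimal {x} (hx : x ∈ feasibleSet gmax dmax) := welfare_lt_of_ne (w := w) ha hd hcommit hx
  have hdual {p} := dual_hull_lt_of_ne (p := p) hcons hprod ha hw.le hd h2 hwg
  refine ⟨⟨⟨Or.inr rfl, by positivity, by simp; linarith, by positivity, by linarith, rfl⟩,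
    fun x hx => ?_, fun x hx heq => ?_, welfare_committed_half a w dmax⟩,
    fun p => ?_, fun p heq => ?_, ?_⟩
  · rcases eq_or_ne x (1, dmax / 2, dmax / 2) with rfl | hne
    · exact le_rfl
    · exact (hprimal hx hne).le
  · by_contra hne
    exact (hprimal hx hne).ne heq
  · rcases eq_or_ne p (a + w / gmax) with rfl | hne
    · exact le_rfl
    · exact (hdual hne).le
  · by_contra hne
    exact (hdual hne).ne' heq
  · rw [dual_hull_eq hcons hprod ha hw.le hd h2 hwg, demandAt, benefit]
    field_simp
    ring
end

section
/- In Example 2 under the stated parameter assumptions, the modified convex hull total uplift equals w²/(a·d_max) and is at most w/6, whereas the convex hull total uplift exceeds w/2; hence the modified total uplift is strictly smaller. -/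
/-!
At the modified price `p̃⁺ = a + 2w/d_max` the consumer's net benefit
`B d - p̃⁺ d` is a concave quadratic whose vertex `d_max/2 - w/a` lies in the modified
output window `[ḡ_min, d_max/2]`, so its supremum is the vertex value and the consumer
uplift is `w²/(a·d_max)`. The producer's profit `(p̃⁺ - a) g - w` vanishes exactly at
`g = d_max/2` and is negative below it, so the producer uplift is `0`. The comparison
with the convex hull gap is then elementary arithmetic using `6w ≤ a·d_max` and
`d_max < g_max`.
-/

open Set

namespace Example2

lemma two_mul_le_sqrt_one_sub_four_mul {t : ℝ} (ht₀ : 0 ≤ t) (ht : t ≤ 1 / 6) :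
    2 * t ≤ √(1 - 4 * t) :=
  Real.le_sqrt_of_sq_le (by nlinarith)

variable {a w dmax : ℝ}

lemma six_mul_le_of_div_le (ha : 0 < a) (h : 6 * w / a ≤ dmax) : 6 * w ≤ a * dmax := by
  rw [div_le_iff₀ ha] at h
  linarith

/-- The left-hand side is the paper's `ḡ_min`. -/
lemma lowerRoot_le_vertex (ha : 0 < a) (hw : 0 < w) (hd : 0 < dmax)
    (had : 6 * w ≤ a * dmax) :
    dmax * (1 - √(1 - 4 * w / (a * dmax))) / 2 ≤ dmax / 2 - w / a := by
  set t := w / (a * dmax) with ht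
  have had' : 0 < a * dmax := by positivity
  have hsqrt : 2 * t ≤ √(1 - 4 * t) :=
    two_mul_le_sqrt_one_sub_four_mul (by positivity)
      (by rw [ht, div_le_iff₀ had']; linarith)
  have hvertex : dmax / 2 - w / a = dmax * (1 - 2 * t) / 2 := by
    rw [ht]; field_simp
  rw [mul_div_assoc 4 w, ← ht, hvertex]
  gcongr

lemma netBenefit_eq_sub_sq (ha : a ≠ 0) (hd : dmax ≠ 0) (d : ℝ) :
    2 * a * d - a * d ^ 2 / dmax - (a + 2 * w / dmax) * d
      = a * dmax / 4 - w + w ^ 2 / (a * dmax) - (a * (dmax / 2 - d) - w) ^ 2 / (a * dmax) := by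
  field_simp
  ring

lemma sSup_netBenefit {S : Set ℝ} (ha : 0 < a) (hd : 0 < dmax)
    (hvertex : dmax / 2 - w / a ∈ S) :
    sSup {v | ∃ d ∈ S, v = 2 * a * d - a * d ^ 2 / dmax - (a + 2 * w / dmax) * d}
      = a * dmax / 4 - w + w ^ 2 / (a * dmax) := by
  refine IsGreatest.csSup_eq ⟨⟨_, hvertex, ?_⟩, ?_⟩
  · rw [netBenefit_eq_sub_sq ha.ne' hd.ne']
    field_simp
    ring
  · rintro v ⟨d, -, rfl⟩
    rw [netBenefit_eq_sub_sq ha.ne' hd.ne']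
    have : 0 ≤ (a * (dmax / 2 - d) - w) ^ 2 / (a * dmax) := by positivity
    linarith

/-- `x = (u, g)` is the commitment `u ∈ {0, 1}` and the output `g`. -/
lemma sSup_profit_eq_zero {p : ℝ} {S : Set ℝ} (hS : ∀ g ∈ S, (p - a) * g ≤ w) :
    sSup {v | ∃ x : ℝ × ℝ, (x = (0, 0) ∨ (x.1 = 1 ∧ x.2 ∈ S)) ∧
        v = p * x.2 - a * x.2 - w * x.1} = 0 := by
  refine IsGreatest.csSup_eq ⟨⟨(0, 0), Or.inl rfl, by simp⟩, ?_⟩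
  rintro v ⟨⟨u, g⟩, hx | ⟨rfl, hg⟩, rfl⟩
  · obtain ⟨rfl, rfl⟩ := Prod.mk.inj hx
    simp
  · have := hS g hg
    simp only
    linarith

lemma profit_at_half (hd : dmax ≠ 0) :
    (a + 2 * w / dmax) * (dmax / 2) - a * (dmax / 2) - w = 0 := by
  field_simp
  ring

lemma modifiedGap_le (hw : 0 < w) (had : 6 * w ≤ a * dmax) :
    w ^ 2 / (a * dmax) ≤ w / 6 := by
  rw [div_le_div_iff₀ (by linarith) (by norm_num)]
  nlinarith

lemma half_lt_convexHullGap {gmax : ℝ} (ha : 0 < a) (hw : 0 < w) (hd : 0 < dmax)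
    (hdg : dmax < gmax) :
    w / 2 < w * (1 - dmax / (2 * gmax) + w * dmax / (4 * a * gmax ^ 2)) := by
  have hg : 0 < gmax := hd.trans hdg
  have hratio : dmax / (2 * gmax) < 1 / 2 := by
    rw [div_lt_div_iff₀ (by positivity) (by norm_num)]
    linarith
  have hpos : 0 < w * dmax / (4 * a * gmax ^ 2) := by positivity
  nlinarith

end Example2

open Example2 in
/-- Example 2 comparison: the modified convex hull total uplift equals `w²/(a·d_max)`
(consumer uplift; producer uplift vanishes at the modified price `p̃⁺ = a + 2w/d_max`)
and is at most `w/6`, whereas the convex hull total uplift exceeds `w/2`; hence the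
modified total uplift is strictly smaller. -/
theorem stmt13 (a w gmax dmax : ℝ)
    (ha : 0 < a) (hw : 0 < w) (h1 : 6 * w / a ≤ dmax) (h2 : dmax < gmax)
    (B : ℝ → ℝ) (hB : B = fun d => 2 * a * d - a * d ^ 2 / dmax)
    (gbar : ℝ) (hgbar : gbar = dmax * (1 - Real.sqrt (1 - 4 * w / (a * dmax))) / 2)
    (ptilde : ℝ) (hpt : ptilde = a + 2 * w / dmax)
    (CHgap Mgap : ℝ)
    (hCH : CHgap = w * (1 - dmax / (2 * gmax) + w * dmax / (4 * a * gmax ^ 2)))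
    (hM : Mgap = w ^ 2 / (a * dmax)) :
    -- consumer uplift in the modified method equals `Mgap`
    sSup {v | ∃ d ∈ insert (0:ℝ) (Set.Icc gbar (dmax / 2)), v = B d - ptilde * d}
        - (B (dmax / 2) - ptilde * (dmax / 2)) = Mgap ∧
    -- producer uplift in the modified method is zero
    sSup {v | ∃ x : ℝ × ℝ, (x = (0, 0) ∨ (x.1 = 1 ∧ x.2 ∈ Set.Icc gbar (dmax / 2))) ∧
        v = ptilde * x.2 - a * x.2 - w * x.1}
      = ptilde * (dmax / 2) - a * (dmax / 2) - w ∧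
    ptilde * (dmax / 2) - a * (dmax / 2) - w = 0 ∧
    Mgap ≤ w / 6 ∧ w / 2 < CHgap ∧ Mgap < CHgap := by
  subst hB hgbar hpt hCH hM
  have hd : 0 < dmax := (by positivity : 0 < 6 * w / a).trans_le h1
  have had := six_mul_le_of_div_le ha h1
  have hvertex : dmax / 2 - w / a ∈ insert 0 (Icc (dmax * (1 - √(1 - 4 * w / (a * dmax))) / 2)
      (dmax / 2)) :=
    mem_insert_of_mem _
      ⟨lowerRoot_le_vertex ha hw hd had, by linarith [(by positivity : 0 < w / a)]⟩
  have hprofit : ∀ g ∈ Icc (dmax * (1 - √(1 - 4 * w / (a * dmax))) / 2) (dmax / 2),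
      (a + 2 * w / dmax - a) * g ≤ w := by
    rintro g ⟨-, hg⟩
    calc (a + 2 * w / dmax - a) * g ≤ (2 * w / dmax) * (dmax / 2) := by
          rw [add_sub_cancel_left]; gcongr
      _ = w := by field_simp
  have hM6 := modifiedGap_le hw had
  have hCH := half_lt_convexHullGap ha hw hd h2
  refine ⟨?_, ?_, profit_at_half hd.ne', hM6, hCH, by linarith⟩
  · rw [sSup_netBenefit ha hd hvertex]
    field_simp
    ring
  · rw [profit_at_half hd.ne']
    exact sSup_profit_eq_zero hprofit
end

section
/- In the uninode single-period system with zero minimum output limits and fixed load part Σ_j d_j^min ≥ g_{i₀}^max for some generator i₀, the maximum technologically and economically feasible output of generator i₀ equals its maximum output limit: ḡ_{i₀}^max = g_{i₀}^max. -/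
/-!
Generator `i₀` runs at full output `g_{i₀}^max ≤ D = Σ_j d_j^min`; the remaining load `D - g_{i₀}^max` is
covered by scaling the capacities of the other generators by the common factor
`(D - g_{i₀}^max) / Σ_{i ≠ i₀} g_i^max ∈ [0, 1]`.
-/

open Finset

theorem exists_nonneg_le_sum_eq {ι K : Type*} [Fintype ι] [Field K] [LinearOrder K]
    [IsStrictOrderedRing K] (b : ι → K) (hb : ∀ i, 0 ≤ b i) {D : K} (hD₀ : 0 ≤ D)
    (hD : D ≤ ∑ i, b i) :
    ∃ out : ι → K, (∀ i, 0 ≤ out i ∧ out i ≤ b i) ∧ ∑ i, out i = D := by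
  set S := ∑ i, b i
  have hS : 0 ≤ S := sum_nonneg fun i _ => hb i
  have ht₀ : 0 ≤ D / S := div_nonneg hD₀ hS
  have ht₁ : D / S ≤ 1 := div_le_one_of_le₀ hD hS
  refine ⟨fun i => D / S * b i, fun i => ⟨mul_nonneg ht₀ (hb i), ?_⟩, ?_⟩
  · exact mul_le_of_le_one_left (hb i) ht₁
  · rw [← mul_sum]
    change D / S * S = D
    -- if `S = 0` the factor `D / S` is the junk value `0`, still correct since then `D = 0`
    rcases hS.eq_or_lt with hS0 | hSpos
    · rw [← hS0, mul_zero]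
      exact (le_antisymm (hS0 ▸ hD) hD₀).symm
    · exact div_mul_cancel₀ D hSpos.ne'

theorem exists_dispatch_of_le_sum {ι K : Type*} [Fintype ι] [DecidableEq ι] [Field K]
    [LinearOrder K] [IsStrictOrderedRing K] (gmax : ι → K) (hg : ∀ i, 0 ≤ gmax i) (i₀ : ι)
    {D : K} (hload : gmax i₀ ≤ D) (hfeas : D ≤ ∑ i, gmax i) :
    ∃ out : ι → K, (∀ i, 0 ≤ out i ∧ out i ≤ gmax i) ∧ ∑ i, out i = D ∧ out i₀ = gmax i₀ := by
  set rest := gmax - Pi.single i₀ (gmax i₀)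
  have hrest : ∀ i, 0 ≤ rest i := by
    intro i
    rcases eq_or_ne i i₀ with rfl | hi
    · simp [rest]
    · simpa [rest, hi] using hg i
  have hsum : ∑ i, rest i = ∑ i, gmax i - gmax i₀ := by
    simp only [rest, Pi.sub_apply, sum_sub_distrib, sum_pi_single', mem_univ, if_true]
  obtain ⟨out, hout, hout_sum⟩ :=
    exists_nonneg_le_sum_eq rest hrest (sub_nonneg.2 hload) (by rw [hsum]; linarith)
  have hout₀ : out i₀ = 0 := le_antisymm (by simpa [rest] using (hout i₀).2) (hout i₀).1
  refine ⟨out + Pi.single i₀ (gmax i₀), fun i => ?_, ?_, by simp [hout₀]⟩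
  · rcases eq_or_ne i i₀ with rfl | hi
    · simp [hout₀, hg i]
    · simpa [rest, hi] using hout i
  · simp only [Pi.add_apply, sum_add_distrib, hout_sum, sum_pi_single', mem_univ, if_true]
    ring

theorem stmt16_general {I J : Type*} [Fintype I] [Fintype J]
    (gmax : I → ℝ) (dmin : J → ℝ) (i0 : I)
    (hg : ∀ i, 0 ≤ gmax i)
    (hload : gmax i0 ≤ ∑ j, dmin j)
    (hfeas : ∑ j, dmin j ≤ ∑ i, gmax i) :
    IsGreatest {g | ∃ out : I → ℝ, (∀ i, 0 ≤ out i ∧ out i ≤ gmax i) ∧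
        (∑ i, out i) = ∑ j, dmin j ∧ out i0 = g} (gmax i0) := by
  classical
  refine ⟨exists_dispatch_of_le_sum gmax hg i0 hload hfeas, ?_⟩
  rintro g ⟨out, hout, -, rfl⟩
  exact (hout i0).2

/-- Proposition 3, second bullet: in the uninode single-period system with zero minimum
output limits, if the fixed load part of demand satisfies `Σ_j d_j^min ≥ g_{i₀}^max`,
then the maximum technologically and economically feasible output of generator `i₀`
(the greatest output attainable in a dispatch exactly covering the fixed load) equals
its maximum output limit `g_{i₀}^max`. -/
theorem stmt16 {I J : Type*} [Fintype I] [Fintype J]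
    (gmax : I → ℝ) (dmin : J → ℝ) (i0 : I)
    (hg : ∀ i, 0 ≤ gmax i) (hd : ∀ j, 0 ≤ dmin j)
    (hload : gmax i0 ≤ ∑ j, dmin j)
    (hfeas : ∑ j, dmin j ≤ ∑ i, gmax i) :
    IsGreatest {g | ∃ out : I → ℝ, (∀ i, 0 ≤ out i ∧ out i ≤ gmax i) ∧
        (∑ i, out i) = ∑ j, dmin j ∧ out i0 = g} (gmax i0) :=
  stmt16_general gmax dmin i0 hg hload hfeas
end
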